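/- arXiv:2602.12126 — 5 statements merged into one kernel-verified Lean document; each statement's English description precedes it below -/
import Mathlib

section
/- Let G be a finite connected graph, s a vertex, and tr : E × [τ] → ℕ₀ a traversal function such that in the full temporal graph (where every edge carries every label in [τ]) s temporally reaches every vertex. Then there exists a labeling λ with |λ(e)| ≤ 1 for every edge e, whose underlying support forms a spanning tree, such that in (G,λ,tr) the vertex s temporally reaches every other vertex. -/
/-- `ReachAt lab tr u v a` : `u` can temporally reach `v` arriving (exactly) at time `a`,
using temporal edges available according to `lab` with traversal times `tr`. -/
inductive ReachAt {V : Type*} (lab : V → V → ℕ → Prop) (tr : V → V → ℕ → ℕ) (u : V) :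
    V → ℕ → Prop
  | refl (a : ℕ) : ReachAt lab tr u u a
  | step {v w : V} {a t : ℕ} : ReachAt lab tr u v a → a ≤ t → lab v w t →
      ReachAt lab tr u w (t + tr v w t)

/-- The graph whose edges are the `G`-edges carrying at least one label. -/
def Hof {V : Type*} (G : SimpleGraph V) (lam : Sym2 V → Finset ℕ) : SimpleGraph V where
  Adj x y := G.Adj x y ∧ (lam s(x, y)).Nonempty
  symm := ⟨fun x y ⟨h, hn⟩ => ⟨h.symm, by rwa [Sym2.eq_swap]⟩⟩
  loopless := ⟨fun x ⟨h, _⟩ => G.loopless.irrefl x h⟩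

lemma ReachAt.mono {V : Type*} {lab lab' : V → V → ℕ → Prop} {tr : V → V → ℕ → ℕ}
    {u v : V} {a : ℕ} (h : ReachAt lab tr u v a)
    (hle : ∀ x y t, lab x y t → lab' x y t) : ReachAt lab' tr u v a := by
  induction h with
  | refl a => exact .refl a
  | step h hat hl ih => exact .step ih hat (hle _ _ _ hl)

lemma acyclic_leaf {V : Type*} [DecidableEq V] {H H' : SimpleGraph V} {u w : V}
    (hH : H.IsAcyclic) (hw : ∀ x, ¬ H.Adj w x)
    (hadj : ∀ x y, H'.Adj x y ↔ H.Adj x y ∨ s(x, y) = s(u, w)) : H'.IsAcyclic := by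
  intro v c hc
  by_cases hmem : w ∈ c.support
  · have hc' := hc.rotate hmem
    rcases hC : c.rotate w hmem with _ | ⟨hadj1, p⟩
    · rw [hC] at hc'; exact hc'.ne_nil rfl
    · rw [hC] at hc'
      rename_i x
      have hwx : w ≠ x := hadj1.ne
      have hxu : x = u := by
        rcases (hadj _ _).1 hadj1 with h | h
        · exact absurd h (hw x)
        · rcases Sym2.eq_iff.mp h with ⟨h1, h2⟩ | ⟨h1, h2⟩
          · exact absurd h2.symm hwx
          · exact h2
      obtain ⟨y, h2, q, hq⟩ := SimpleGraph.Walk.exists_eq_cons_of_ne hwx p.reverse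
      have hyu : y = u := by
        rcases (hadj _ _).1 h2 with h | h
        · exact absurd h (hw y)
        · rcases Sym2.eq_iff.mp h with ⟨h1', h2'⟩ | ⟨h1', h2'⟩
          · exact absurd h2'.symm h2.ne
          · exact h2'
      have hmem2 : s(w, y) ∈ p.edges := by
        have : s(w, y) ∈ p.reverse.edges := by
          rw [hq]; exact List.mem_cons_self
        rwa [SimpleGraph.Walk.edges_reverse, List.mem_reverse] at this
      have hnodup := hc'.edges_nodup
      rw [SimpleGraph.Walk.edges_cons] at hnodup
      have : s(w, x) ∈ p.edges := by
        have : s(w, x) = s(w, y) := by rw [hxu, hyu]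
        rw [this]; exact hmem2
      exact (List.nodup_cons.mp hnodup).1 this
  · have hsub : ∀ e ∈ c.edges, e ∈ H.edgeSet := by
      intro e he
      have he' : e ∈ H'.edgeSet := c.edges_subset_edgeSet he
      induction e using Sym2.ind with
      | _ x y =>
        rcases (hadj x y).1 he' with h | h
        · exact h
        · rw [h] at he
          exact absurd (SimpleGraph.Walk.snd_mem_support_of_mem_edges c he) hmem
    exact hH (c.transfer H hsub) (hc.transfer hsub)

lemma reachable_of_reachAt {V : Type*} {G : SimpleGraph V} {lam : Sym2 V → Finset ℕ}
    {tr : V → V → ℕ → ℕ} {s v : V} {a : ℕ}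
    (h : ReachAt (fun x y t => G.Adj x y ∧ t ∈ lam s(x, y)) tr s v a) :
    (Hof G lam).Reachable s v := by
  induction h with
  | refl => exact SimpleGraph.Reachable.refl _
  | step h hat hl ih => exact ih.trans (SimpleGraph.Adj.reachable ⟨hl.1, ⟨_, hl.2⟩⟩)

/-- The invariant maintained while growing the labelled spanning tree. -/
abbrev TInv {V : Type*} (G : SimpleGraph V) (s : V) (τ : ℕ) (tr : V → V → ℕ → ℕ)
    (A : V → ℕ) (S : Finset V) (lam : Sym2 V → Finset ℕ) : Prop :=
  s ∈ S ∧
  (∀ e, (lam e).card ≤ 1) ∧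
  (∀ e, lam e ⊆ Finset.Icc 1 τ) ∧
  (∀ x y, (lam s(x, y)).Nonempty → G.Adj x y ∧ x ∈ S ∧ y ∈ S) ∧
  (∀ v ∈ S, ReachAt (fun x y t => G.Adj x y ∧ t ∈ lam s(x, y)) tr s v (A v)) ∧
  (Hof G lam).IsAcyclic


/-!
STATEMENT 3: If `s` temporally reaches every vertex of a finite connected graph `G` in
the full temporal graph (every edge available at every time of `[1, τ]`), then there is
a labeling `lam` with at most one label per edge, labels within `[1, τ]`, whose support
is a spanning tree of `G`, in which `s` still temporally reaches every vertex.
-/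
theorem exists_spanning_out_tree_labeling {V : Type*} [Fintype V]
    (G : SimpleGraph V) (hG : G.Connected) (s : V) (τ : ℕ) (tr : V → V → ℕ → ℕ)
    (hreach : ∀ v : V, ∃ a : ℕ,
      ReachAt (fun x y t => G.Adj x y ∧ t ∈ Finset.Icc 1 τ) tr s v a) :
    ∃ lam : Sym2 V → Finset ℕ,
      (∀ e, (lam e).card ≤ 1) ∧
      (∀ e, lam e ⊆ Finset.Icc 1 τ) ∧
      (∃ H : SimpleGraph V,
        (∀ x y, H.Adj x y ↔ G.Adj x y ∧ (lam s(x, y)).Nonempty) ∧ H.IsTree) ∧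
      (∀ v : V, ∃ a : ℕ,
        ReachAt (fun x y t => G.Adj x y ∧ t ∈ lam s(x, y)) tr s v a) := by
  classical
  set A : V → ℕ := fun v => Nat.find (hreach v) with hA
  have hAspec : ∀ v, ReachAt (fun x y t => G.Adj x y ∧ t ∈ Finset.Icc 1 τ) tr s v (A v) :=
    fun v => Nat.find_spec (hreach v)
  have hAmin : ∀ v a, ReachAt (fun x y t => G.Adj x y ∧ t ∈ Finset.Icc 1 τ) tr s v a →
      A v ≤ a := fun v a h => Nat.find_min' (hreach v) h
  -- crossing lemma
  have crossing : ∀ (S : Finset V) (m : ℕ), s ∈ S → (∀ x, x ∉ S → m ≤ A x) →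
      ∀ (v : V) (a : ℕ), ReachAt (fun x y t => G.Adj x y ∧ t ∈ Finset.Icc 1 τ) tr s v a →
      v ∉ S → a ≤ m →
      ∃ u w t, u ∈ S ∧ w ∉ S ∧ G.Adj u w ∧ t ∈ Finset.Icc 1 τ ∧ A u ≤ t ∧
        t + tr u w t = A w := by
    intro S m hsS hmin v a h
    induction h with
    | refl a => exact fun hv _ => absurd hsS hv
    | step h1 hat hl ih =>
      rename_i v' w' a' t'
      intro hw hm
      by_cases hvS : v' ∈ S
      · refine ⟨v', w', t', hvS, hw, hl.1, hl.2, (hAmin _ _ h1).trans hat, ?_⟩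
        exact le_antisymm (hm.trans (hmin _ hw)) (hAmin _ _ (.step h1 hat hl))
      · exact ih hvS (le_trans (hat.trans (Nat.le_add_right _ _)) hm)
  -- growing the tree
  have grow : ∀ (n : ℕ) (S : Finset V) (lam : Sym2 V → Finset ℕ), Sᶜ.card ≤ n →
      TInv G s τ tr A S lam → ∃ lam', TInv G s τ tr A Finset.univ lam' := by
    intro n
    induction n with
    | zero =>
      intro S lam hcard hinv
      have hS : S = Finset.univ := by
        have : Sᶜ = ∅ := Finset.card_eq_zero.mp (Nat.le_zero.mp hcard)
        rwa [Finset.compl_eq_empty_iff] at this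
      exact ⟨lam, hS ▸ hinv⟩
    | succ n ih =>
      intro S lam hcard hinv
      by_cases hS : S = Finset.univ
      · exact ⟨lam, hS ▸ hinv⟩
      · have hne : Sᶜ.Nonempty := by
          rw [Finset.nonempty_iff_ne_empty]
          intro h
          exact hS ((Finset.compl_eq_empty_iff _).mp h)
        obtain ⟨v, hvmem, hvmin⟩ := Finset.exists_min_image Sᶜ A hne
        have hvS : v ∉ S := Finset.mem_compl.mp hvmem
        obtain ⟨hsS, hcard1, hsub, hsupp, hreach', hacy⟩ := hinv
        obtain ⟨u, w, t, huS, hwS, hadj, ht, hAu, hAw⟩ :=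
          crossing S (A v) hsS (fun x hx => hvmin x (Finset.mem_compl.mpr hx)) v (A v)
            (hAspec v) hvS le_rfl
        set lam' := fun e => if e = s(u, w) then ({t} : Finset ℕ) else lam e with hlam'
        have hempty : lam s(u, w) = ∅ := by
          by_contra h
          exact hwS (hsupp u w (Finset.nonempty_iff_ne_empty.mpr h)).2.2
        have hmono : ∀ e, lam e ⊆ lam' e := by
          intro e
          by_cases he : e = s(u, w)
          · rw [he, hempty]; exact Finset.empty_subset _
          · simp [lam', he]
        have hlift : ∀ x y t', (G.Adj x y ∧ t' ∈ lam s(x, y)) →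
            (G.Adj x y ∧ t' ∈ lam' s(x, y)) := fun x y t' ⟨h1, h2⟩ => ⟨h1, hmono _ h2⟩
        refine ih (insert w S) lam' ?_ ⟨Finset.mem_insert_of_mem hsS, ?_, ?_, ?_, ?_, ?_⟩
        · rw [Finset.compl_insert]
          have h1 := Finset.card_erase_of_mem (Finset.mem_compl.mpr hwS)
          have h2 : 1 ≤ Sᶜ.card := Finset.card_pos.mpr ⟨w, Finset.mem_compl.mpr hwS⟩
          omega
        · intro e
          by_cases he : e = s(u, w) <;> simp [lam', he, hcard1 e]
        · intro e
          by_cases he : e = s(u, w)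
          · simpa [lam', he] using ht
          · simpa [lam', he] using hsub e
        · intro x y hne
          by_cases he : s(x, y) = s(u, w)
          · rcases Sym2.eq_iff.mp he with ⟨rfl, rfl⟩ | ⟨rfl, rfl⟩
            · exact ⟨hadj, Finset.mem_insert_of_mem huS, Finset.mem_insert_self _ _⟩
            · exact ⟨hadj.symm, Finset.mem_insert_self _ _, Finset.mem_insert_of_mem huS⟩
          · have h := hsupp x y (by simpa [lam', he] using hne)
            exact ⟨h.1, Finset.mem_insert_of_mem h.2.1, Finset.mem_insert_of_mem h.2.2⟩
        · intro z hz
          rcases Finset.mem_insert.mp hz with rfl | hzS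
          · have hru := (hreach' u huS).mono hlift
            have hstep := ReachAt.step hru hAu ⟨hadj, by simp [lam']⟩
            rwa [hAw] at hstep
          · exact (hreach' z hzS).mono hlift
        · refine acyclic_leaf (u := u) (w := w) hacy ?_ ?_
          · rintro x ⟨h1, h2⟩
            exact hwS (hsupp w x h2).2.1
          · intro x y
            constructor
            · rintro ⟨h1, h2⟩
              by_cases he : s(x, y) = s(u, w)
              · exact Or.inr he
              · exact Or.inl ⟨h1, by simpa [lam', he] using h2⟩
            · rintro (⟨h1, h2⟩ | he)
              · exact ⟨h1, h2.mono (hmono _)⟩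
              · have hne : (lam' s(x, y)).Nonempty := by
                  simp [lam', he]
                rcases Sym2.eq_iff.mp he with ⟨rfl, rfl⟩ | ⟨rfl, rfl⟩
                · exact ⟨hadj, hne⟩
                · exact ⟨hadj.symm, hne⟩
  -- initial invariant and conclusion
  have hinit : TInv G s τ tr A {s} (fun _ => (∅ : Finset ℕ)) := by
    refine ⟨Finset.mem_singleton_self s, fun e => by simp, fun e => by simp,
      fun x y h => absurd h (by simp), ?_, ?_⟩
    · intro v hv
      rw [Finset.mem_singleton] at hv
      subst hv
      exact .refl (A v)
    · intro v c hc
      cases c with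
      | nil => exact hc.ne_nil rfl
      | cons h p => exact absurd h.2 (by simp)
  obtain ⟨lam, _, hc1, hc2, hsupp, hre, hacy⟩ :=
    grow ({s} : Finset V)ᶜ.card {s} (fun _ => ∅) le_rfl hinit
  have hreS : ∀ v, (Hof G lam).Reachable s v :=
    fun v => reachable_of_reachAt (hre v (Finset.mem_univ v))
  refine ⟨lam, hc1, hc2, ⟨Hof G lam, fun x y => Iff.rfl, ?_, ?_⟩,
    fun v => ⟨A v, hre v (Finset.mem_univ v)⟩⟩
  · haveI : Nonempty V := ⟨s⟩
    exact ⟨fun x y => (hreS x).symm.trans (hreS y)⟩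
  · exact hacy
end

section
/- Let G be a connected graph, s₁, s₂ two vertices, and suppose there exists a simple path P from s₁ to s₂ in G such that removing the edges of P leaves G connected. Then there exists a labeling λ assigning at most one time label to each edge, with unit traversal times (tr(e,t)=1 for all e,t), such that in the temporal graph (G,λ,tr) both s₁ and s₂ temporally reach every vertex of G. -/
private lemma reach_along_walk {V : Type*} (G : SimpleGraph V) (lam : Sym2 V → Finset ℕ)
    (s : V) :
    ∀ {u v : V} (q : G.Walk u v) (k : ℕ),
      (∀ j (hj : j < q.edges.length), (k + j + 1) ∈ lam (q.edges.get ⟨j, hj⟩)) →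
      ReachAt (fun x y t' => G.Adj x y ∧ t' ∈ lam s(x, y)) (fun _ _ _ => 1) s u (k + 1) →
      ReachAt (fun x y t' => G.Adj x y ∧ t' ∈ lam s(x, y)) (fun _ _ _ => 1) s v
        (k + q.length + 1) := by
  intro u v q
  induction q with
  | nil => intro k _ h; simpa using h
  | @cons u b _ hadj q ih =>
    intro k hlab h
    have h1 : (k + 1) ∈ lam s(u, b) := by
      have := hlab 0 (by simp)
      simpa using this
    have h2 : ReachAt (fun x y t' => G.Adj x y ∧ t' ∈ lam s(x, y)) (fun _ _ _ => 1)
        s b ((k + 1) + 1) :=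
      ReachAt.step h le_rfl ⟨hadj, h1⟩
    have h3 := ih (k + 1) (by
      intro j hj
      have := hlab (j + 1) (by simpa using Nat.succ_lt_succ hj)
      simpa [Nat.add_assoc, Nat.add_comm, Nat.add_left_comm] using this) h2
    have e : k + (SimpleGraph.Walk.cons hadj q).length + 1 = (k + 1) + q.length + 1 := by
      simp [SimpleGraph.Walk.length_cons]; omega
    rw [e]; exact h3

private lemma exists_adj_dist {V : Type*} {G : SimpleGraph V} (hconn : G.Connected)
    {s : V} {n : ℕ} {v : V} (hv : G.dist s v = n + 1) :
    ∃ u, G.Adj u v ∧ G.dist s u = n := by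
  have hne : v ≠ s := by
    intro h; subst h; simp [SimpleGraph.dist_self] at hv
  obtain ⟨w, hw⟩ := hconn.exists_walk_length_eq_dist s v
  obtain ⟨u, huv, q, hq⟩ := SimpleGraph.Walk.exists_eq_cons_of_ne hne w.reverse
  have hqlen : q.length = n := by
    have h2 : w.reverse.length = n + 1 := by
      rw [SimpleGraph.Walk.length_reverse, hw, hv]
    rw [hq] at h2
    simpa using h2
  have hdu_le : G.dist s u ≤ n := by
    have := SimpleGraph.dist_le q.reverse
    simpa [hqlen] using this
  have hdu_ge : n ≤ G.dist s u := by
    obtain ⟨wu, hwu⟩ := hconn.exists_walk_length_eq_dist s u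
    have h1 : G.dist s v ≤ G.dist s u + 1 := by
      have := SimpleGraph.dist_le (wu.append (SimpleGraph.Walk.cons huv.symm SimpleGraph.Walk.nil))
      simpa [hwu] using this
    omega
  exact ⟨u, huv.symm, le_antisymm hdu_le hdu_ge⟩

/-!
STATEMENT 6: If a connected graph `G` has a simple path `p` from `s₁` to `s₂` whose edge
removal leaves `G` connected, then there is a labeling with at most one time label per
edge, with unit traversal times, under which both `s₁` and `s₂` temporally reach every
vertex of `G`.
-/
theorem nonseparating_path_gives_two_source_labeling {V : Type*} [Fintype V]
    (G : SimpleGraph V) (hG : G.Connected) (s₁ s₂ : V)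
    (p : G.Walk s₁ s₂) (hp : p.IsPath)
    (hconn : (G.deleteEdges {e | e ∈ p.edges}).Connected) :
    ∃ lam : Sym2 V → Finset ℕ,
      (∀ e, (lam e).card ≤ 1) ∧
      (∀ v : V, ∃ a : ℕ,
        ReachAt (fun x y t => G.Adj x y ∧ t ∈ lam s(x, y)) (fun _ _ _ => 1) s₁ v a) ∧
      (∀ v : V, ∃ a : ℕ,
        ReachAt (fun x y t => G.Adj x y ∧ t ∈ lam s(x, y)) (fun _ _ _ => 1) s₂ v a) := by
  classical
  set G' : SimpleGraph V := G.deleteEdges {e | e ∈ p.edges} with hG'def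
  set d : V → ℕ := fun v => G'.dist s₂ v with hd
  set t : ℕ := p.length with ht
  set lam : Sym2 V → Finset ℕ := Sym2.lift
    ⟨fun x y => if s(x, y) ∈ p.edges then {List.idxOf s(x, y) p.edges + 1}
        else {t + 1 + min (d x) (d y)},
      by
        intro x y
        dsimp only
        rw [Sym2.eq_swap, min_comm]⟩ with hlam
  have hlam_mk : ∀ x y : V, lam s(x, y) =
      if s(x, y) ∈ p.edges then {List.idxOf s(x, y) p.edges + 1}
      else {t + 1 + min (d x) (d y)} := by
    intro x y; simp [hlam]
  have hGadj : ∀ u v : V, G'.Adj u v → G.Adj u v := by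
    intro u v h
    exact (SimpleGraph.deleteEdges_adj.mp h).1
  have htree : ∀ u v : V, G'.Adj u v → lam s(u, v) = {t + 1 + min (d u) (d v)} := by
    intro u v h
    have hne : s(u, v) ∉ p.edges := (SimpleGraph.deleteEdges_adj.mp h).2
    rw [hlam_mk, if_neg hne]
  -- existence of a closer neighbor
  have hexists_adj : ∀ (n : ℕ) (v : V), d v = n + 1 → ∃ u, G'.Adj u v ∧ d u = n := by
    intro n v hv
    exact exists_adj_dist hconn hv
  -- reaching any vertex from something that reaches s₂ early enough
  have hreach2 : ∀ (n : ℕ) (v : V), d v = n → ∀ (x : V) (a : ℕ),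
      ReachAt (fun x y t' => G.Adj x y ∧ t' ∈ lam s(x, y)) (fun _ _ _ => 1) x s₂ a →
      a ≤ t + 1 →
      ∃ b ≤ t + 1 + n,
        ReachAt (fun x y t' => G.Adj x y ∧ t' ∈ lam s(x, y)) (fun _ _ _ => 1) x v b := by
    intro n
    induction n with
    | zero =>
      intro v hv x a hx ha
      have hveq : v = s₂ := by
        have hr : G'.Reachable s₂ v := hconn s₂ v
        have := (hr.dist_eq_zero_iff).mp hv
        exact this.symm
      subst hveq
      exact ⟨a, by omega, hx⟩
    | succ n ih =>
      intro v hv x a hx ha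
      obtain ⟨u, huv, hu⟩ := hexists_adj n v hv
      obtain ⟨b, hb, hru⟩ := ih u hu x a hx ha
      have hmem : (t + 1 + n) ∈ lam s(u, v) := by
        rw [htree u v huv, hu, hv]
        simp [min_def]
      refine ⟨t + 1 + n + 1, by omega, ?_⟩
      exact ReachAt.step hru (by omega) ⟨hGadj u v huv, hmem⟩
  have hpe : ∀ e, e ∈ p.edges → lam e = {List.idxOf e p.edges + 1} := by
    intro e
    induction e using Sym2.ind with
    | _ x y => intro hm; rw [hlam_mk, if_pos hm]
  -- s₁ reaches s₂ at time t+1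
  have hs1s2 : ReachAt (fun x y t' => G.Adj x y ∧ t' ∈ lam s(x, y)) (fun _ _ _ => 1)
      s₁ s₂ (t + 1) := by
    have hlabels : ∀ j (hj : j < p.edges.length), (0 + j + 1) ∈ lam (p.edges.get ⟨j, hj⟩) := by
      intro j hj
      have hmem : p.edges.get ⟨j, hj⟩ ∈ p.edges := List.get_mem _ _
      have hidx : List.idxOf (p.edges.get ⟨j, hj⟩) p.edges = j := by
        simpa using List.Nodup.idxOf_getElem hp.edges_nodup j hj
      rw [hpe _ hmem, hidx]
      simp
    have h1 := reach_along_walk G lam s₁ p 0 hlabels (ReachAt.refl 1)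
    simpa [ht] using h1
  refine ⟨lam, ?_, ?_, ?_⟩
  · intro e
    induction e using Sym2.ind with
    | _ x y =>
      rw [hlam_mk]
      split <;> simp
  · intro v
    obtain ⟨b, _, hb⟩ := hreach2 (d v) v rfl s₁ (t + 1) hs1s2 le_rfl
    exact ⟨b, hb⟩
  · intro v
    obtain ⟨b, _, hb⟩ := hreach2 (d v) v rfl s₂ 0 (ReachAt.refl 0) (by omega)
    exact ⟨b, hb⟩
end

section
/- Let G be a graph, s a vertex, tr a traversal function, and let G_tr be the full temporal graph of G and tr. Define FT_min = max over vertices v of the minimum duration of a temporal s–v path in G_tr, and FT_max = max over vertices v of the maximum duration of a temporal s–v path in G_tr. Then for every labeling λ (with λ(e) ⊆ [τ]) in which s temporally reaches all vertices, the worst-case fastest time satisfies FT_min ≤ max_v FT(s,v,(G,λ,tr)) ≤ FT_max. Consequently any feasible labeling is an (FT_max/FT_min)-approximation of the optimal labeling for the single-source FT-Temporal Multi-Broadcast problem. -/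
structure TPath {V : Type*} (lab : V → V → ℕ → Prop) (tr : V → V → ℕ → ℕ) (u v : V) where
  k : ℕ
  hk : 0 < k
  vs : Fin (k + 1) → V
  ts : Fin k → ℕ
  h0 : vs 0 = u
  hl : vs (Fin.last k) = v
  hlab : ∀ i : Fin k, lab (vs i.castSucc) (vs i.succ) (ts i)
  hchain : ∀ (i : Fin k) (h : i.1 + 1 < k),
    ts i + tr (vs i.castSucc) (vs i.succ) (ts i) ≤ ts ⟨i.1 + 1, h⟩

namespace TPath

variable {V : Type*} {lab : V → V → ℕ → Prop} {tr : V → V → ℕ → ℕ} {u v : V}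

/-- Index of the last temporal edge. -/
def lastIdx (P : TPath lab tr u v) : Fin P.k := ⟨P.k - 1, Nat.sub_lt P.hk Nat.one_pos⟩

/-- Departure time. -/
def dep (P : TPath lab tr u v) : ℕ := P.ts ⟨0, P.hk⟩

/-- Arrival time. -/
def arr (P : TPath lab tr u v) : ℕ :=
  P.ts P.lastIdx + tr (P.vs P.lastIdx.castSucc) (P.vs P.lastIdx.succ) (P.ts P.lastIdx)

/-- Duration. -/
def dur (P : TPath lab tr u v) : ℕ := P.arr - P.dep

/-- Total traveling time. -/
def ttr (P : TPath lab tr u v) : ℕ :=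
  ∑ i : Fin P.k, tr (P.vs i.castSucc) (P.vs i.succ) (P.ts i)

/-- Time at which the next edge of the path is taken (arrival time for the last edge). -/
def nextT (P : TPath lab tr u v) (i : Fin P.k) : ℕ :=
  if h : i.1 + 1 < P.k then P.ts ⟨i.1 + 1, h⟩ else P.arr

/-- Total waiting time. -/
def wait (P : TPath lab tr u v) : ℕ :=
  ∑ i : Fin P.k, (P.nextT i - P.ts i - tr (P.vs i.castSucc) (P.vs i.succ) (P.ts i))

end TPath

/-- The fastest time (minimum duration) from `u` to `v`. -/
noncomputable def FT {V : Type*} (lab : V → V → ℕ → Prop) (tr : V → V → ℕ → ℕ)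
    (u v : V) : ℕ :=
  sInf {d | ∃ P : TPath lab tr u v, P.dur = d}

/-- The maximum duration of a temporal path from `u` to `v`. -/
noncomputable def FTsup {V : Type*} (lab : V → V → ℕ → Prop) (tr : V → V → ℕ → ℕ)
    (u v : V) : ℕ :=
  sSup {d | ∃ P : TPath lab tr u v, P.dur = d}

/-- The availability relation of the full temporal graph of `G` and `tr` with lifetime `τ`. -/
def fullLab {V : Type*} (G : SimpleGraph V) (τ : ℕ) : V → V → ℕ → Prop :=
  fun x y t => G.Adj x y ∧ t ∈ Finset.Icc 1 τ

/-- The availability relation induced by a labeling `lam` on the edges of `G`. -/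
def labOf {V : Type*} (G : SimpleGraph V) (lam : Sym2 V → Finset ℕ) : V → V → ℕ → Prop :=
  fun x y t => G.Adj x y ∧ t ∈ lam s(x, y)

/-!
STATEMENT 9: With `FT_min` (resp. `FT_max`) the maximum over vertices `v ≠ s` of the
minimum (resp. maximum) duration of a temporal `s–v` path in the full temporal graph,
every labeling `lam ⊆ [1, τ]` in which `s` temporally reaches all vertices satisfies
`FT_min ≤ max_v FT(s, v, (G, lam, tr)) ≤ FT_max`; consequently, any feasible labeling is
an `(FT_max / FT_min)`-approximation of any other (in particular of an optimal) one.
-/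
/-- Relabel a temporal path under a sub-labeling as a path in the full temporal graph. -/
def TPath.toFull {V : Type*} {G : SimpleGraph V} {lam : Sym2 V → Finset ℕ} {τ : ℕ}
    (hsub : ∀ e, lam e ⊆ Finset.Icc 1 τ) {tr : V → V → ℕ → ℕ} {u v : V}
    (P : TPath (labOf G lam) tr u v) : TPath (fullLab G τ) tr u v :=
  { P with hlab := fun i => ⟨(P.hlab i).1, hsub _ (P.hlab i).2⟩ }

lemma TPath.toFull_dur {V : Type*} {G : SimpleGraph V} {lam : Sym2 V → Finset ℕ} {τ : ℕ}
    (hsub : ∀ e, lam e ⊆ Finset.Icc 1 τ) {tr : V → V → ℕ → ℕ} {u v : V}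
    (P : TPath (labOf G lam) tr u v) : (P.toFull hsub).dur = P.dur := rfl

lemma fullDur_bdd {V : Type*} [Fintype V] [DecidableEq V] (G : SimpleGraph V) (τ : ℕ)
    (tr : V → V → ℕ → ℕ) (u v : V) :
    BddAbove {d | ∃ P : TPath (fullLab G τ) tr u v, P.dur = d} := by
  classical
  refine ⟨τ + (Finset.univ ×ˢ Finset.univ ×ˢ Finset.Icc 1 τ).sup
      (fun p => tr p.1 p.2.1 p.2.2), ?_⟩
  rintro d ⟨P, rfl⟩
  have hmem := (P.hlab P.lastIdx).2
  have hts : P.ts P.lastIdx ≤ τ := (Finset.mem_Icc.mp hmem).2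
  have htr : tr (P.vs P.lastIdx.castSucc) (P.vs P.lastIdx.succ) (P.ts P.lastIdx) ≤
      (Finset.univ ×ˢ Finset.univ ×ˢ Finset.Icc 1 τ).sup (fun p => tr p.1 p.2.1 p.2.2) := by
    exact Finset.le_sup (f := fun p => tr p.1 p.2.1 p.2.2)
      (by simp [Finset.mem_product, hmem] :
        (P.vs P.lastIdx.castSucc, P.vs P.lastIdx.succ, P.ts P.lastIdx) ∈
          Finset.univ ×ˢ Finset.univ ×ˢ Finset.Icc 1 τ)
  calc P.dur ≤ P.arr := Nat.sub_le _ _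
    _ ≤ _ := Nat.add_le_add hts htr

lemma FT_full_le_FT_lam {V : Type*} [Fintype V] [DecidableEq V] (G : SimpleGraph V) (τ : ℕ)
    (tr : V → V → ℕ → ℕ) {lam : Sym2 V → Finset ℕ} (hsub : ∀ e, lam e ⊆ Finset.Icc 1 τ)
    (u v : V) (hne : Nonempty (TPath (labOf G lam) tr u v)) :
    FT (fullLab G τ) tr u v ≤ FT (labOf G lam) tr u v := by
  obtain ⟨P⟩ := hne
  have hne' : {d | ∃ P : TPath (labOf G lam) tr u v, P.dur = d}.Nonempty := ⟨P.dur, P, rfl⟩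
  obtain ⟨Q, hQ⟩ := Nat.sInf_mem hne'
  calc FT (fullLab G τ) tr u v ≤ (Q.toFull hsub).dur := Nat.sInf_le ⟨Q.toFull hsub, rfl⟩
    _ = FT (labOf G lam) tr u v := hQ

lemma FT_lam_le_FTsup {V : Type*} [Fintype V] [DecidableEq V] (G : SimpleGraph V) (τ : ℕ)
    (tr : V → V → ℕ → ℕ) {lam : Sym2 V → Finset ℕ} (hsub : ∀ e, lam e ⊆ Finset.Icc 1 τ)
    (u v : V) (hne : Nonempty (TPath (labOf G lam) tr u v)) :
    FT (labOf G lam) tr u v ≤ FTsup (fullLab G τ) tr u v := by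
  obtain ⟨P⟩ := hne
  calc FT (labOf G lam) tr u v ≤ P.dur := Nat.sInf_le ⟨P, rfl⟩
    _ ≤ FTsup (fullLab G τ) tr u v :=
      le_csSup (fullDur_bdd G τ tr u v) ⟨P.toFull hsub, rfl⟩

theorem ft_worst_case_bounds {V : Type*} [Fintype V] [DecidableEq V]
    (G : SimpleGraph V) (s : V) (τ : ℕ) (tr : V → V → ℕ → ℕ) :
    ∀ lam : Sym2 V → Finset ℕ,
      (∀ e, lam e ⊆ Finset.Icc 1 τ) →
      (∀ v : V, v ≠ s → Nonempty (TPath (labOf G lam) tr s v)) →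
      ((Finset.univ.erase s).sup (fun v => FT (fullLab G τ) tr s v) ≤
          (Finset.univ.erase s).sup (fun v => FT (labOf G lam) tr s v) ∧
        (Finset.univ.erase s).sup (fun v => FT (labOf G lam) tr s v) ≤
          (Finset.univ.erase s).sup (fun v => FTsup (fullLab G τ) tr s v)) ∧
      (∀ lam' : Sym2 V → Finset ℕ,
        (∀ e, lam' e ⊆ Finset.Icc 1 τ) →
        (∀ v : V, v ≠ s → Nonempty (TPath (labOf G lam') tr s v)) →
        (Finset.univ.erase s).sup (fun v => FT (fullLab G τ) tr s v) *
            (Finset.univ.erase s).sup (fun v => FT (labOf G lam) tr s v) ≤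
          (Finset.univ.erase s).sup (fun v => FTsup (fullLab G τ) tr s v) *
            (Finset.univ.erase s).sup (fun v => FT (labOf G lam') tr s v)) := by
  have key : ∀ (lam : Sym2 V → Finset ℕ), (∀ e, lam e ⊆ Finset.Icc 1 τ) →
      (∀ v : V, v ≠ s → Nonempty (TPath (labOf G lam) tr s v)) →
      (Finset.univ.erase s).sup (fun v => FT (fullLab G τ) tr s v) ≤
          (Finset.univ.erase s).sup (fun v => FT (labOf G lam) tr s v) ∧
        (Finset.univ.erase s).sup (fun v => FT (labOf G lam) tr s v) ≤
          (Finset.univ.erase s).sup (fun v => FTsup (fullLab G τ) tr s v) := by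
    intro lam hsub hreach
    constructor
    · refine Finset.sup_le fun v hv => ?_
      have hvs : v ≠ s := (Finset.mem_erase.mp hv).1
      exact le_trans (FT_full_le_FT_lam G τ tr hsub s v (hreach v hvs))
        (Finset.le_sup hv)
    · refine Finset.sup_le fun v hv => ?_
      have hvs : v ≠ s := (Finset.mem_erase.mp hv).1
      exact le_trans (FT_lam_le_FTsup G τ tr hsub s v (hreach v hvs))
        (Finset.le_sup hv)
  intro lam hsub hreach
  refine ⟨key lam hsub hreach, fun lam' hsub' hreach' => ?_⟩
  have h1 := (key lam' hsub' hreach').1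
  have h2 := (key lam hsub hreach).2
  calc _ ≤ (Finset.univ.erase s).sup (fun v => FT (labOf G lam') tr s v) *
        (Finset.univ.erase s).sup (fun v => FTsup (fullLab G τ) tr s v) :=
      Nat.mul_le_mul h1 h2
    _ = _ := Nat.mul_comm _ _
end

section
/- Suppose in a graph G a clause gadget consists of a center vertex c, three leaf vertices v₁, v₂, v₃, and three subdivision vertices z₁, z₂, z₃ with edges {v_i, z_i} and {z_i, c} for i = 1,2,3, and these are the only edges incident to c, z₁, z₂, z₃. If a labeling λ with one label per edge and unit traversal times makes two sources s₁ and s₂ temporally reach all of c, z₁, z₂, z₃, where s₁ can enter the gadget only through v₁ and s₂ only through v₂ and v₃, then no such labeling exists: in any labeling where s₁ reaches c, z₂, z₃ via v₁ (forcing λ({v₁,z₁}) < λ({z₁,c}) < λ({c,z₂}) and λ({z₁,c}) < λ({c,z₃})), the source s₂ cannot temporally reach z₁. -/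
/-!
STATEMENT 15: In a clause gadget (center `c`, leaves `v₁, v₂, v₃`, subdivision vertices
`z₁, z₂, z₃`, edges `{v_i, z_i}` and `{z_i, c}`, and no other edge incident to `c, z₁, z₂,
z₃`), with one label per edge and unit traversal times, if `s₁` reaches `c, z₂, z₃` via
`v₁`, forcing the labels to satisfy `λ({v₁,z₁}) < λ({z₁,c}) < λ({c,z₂})` and
`λ({z₁,c}) < λ({c,z₃})`, and `s₂` enters the gadget only through `v₂, v₃` (in particular
it cannot reach `v₁` by time `λ({v₁,z₁})`), then `s₂` cannot temporally reach `z₁`.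
-/
theorem clause_gadget_unreachable {V : Type*}
    (G : SimpleGraph V) (s₂ c v₁ v₂ v₃ z₁ z₂ z₃ : V)
    (hdistinct : ([c, z₁, z₂, z₃, v₁, v₂, v₃] : List V).Pairwise Ne)
    (hnc : G.neighborSet c = {z₁, z₂, z₃})
    (hnz₁ : G.neighborSet z₁ = {v₁, c})
    (hnz₂ : G.neighborSet z₂ = {v₂, c})
    (hnz₃ : G.neighborSet z₃ = {v₃, c})
    (lam : Sym2 V → Finset ℕ) (hone : ∀ e, (lam e).card ≤ 1)
    (a₁ b₁ b₂ b₃ : ℕ)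
    (ha₁ : lam s(v₁, z₁) = {a₁}) (hb₁ : lam s(z₁, c) = {b₁})
    (hb₂ : lam s(c, z₂) = {b₂}) (hb₃ : lam s(c, z₃) = {b₃})
    (hord₁ : a₁ < b₁) (hord₂ : b₁ < b₂) (hord₃ : b₁ < b₃)
    (hs₂ : s₂ ∉ ({c, z₁, z₂, z₃, v₁} : Set V))
    (hblock : ¬ ∃ b ≤ a₁,
      ReachAt (fun x y t => G.Adj x y ∧ t ∈ lam s(x, y)) (fun _ _ _ => 1) s₂ v₁ b) :
    ¬ ∃ a : ℕ,
      ReachAt (fun x y t => G.Adj x y ∧ t ∈ lam s(x, y)) (fun _ _ _ => 1) s₂ z₁ a := by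
  simp only [List.pairwise_cons, List.mem_cons, List.mem_singleton] at hdistinct
  simp only [Set.mem_insert_iff, Set.mem_singleton_iff, not_or] at hs₂
  rintro ⟨a, h⟩
  have key : ∀ w a, ReachAt (fun x y t => G.Adj x y ∧ t ∈ lam s(x, y))
      (fun _ _ _ => 1) s₂ w a → w ≠ z₁ ∧ (w = c → b₁ < a) := by
    intro w a h
    induction h with
    | refl a => exact ⟨hs₂.2.1, fun hc => absurd hc hs₂.1⟩
    | @step v w a t hr hle hlab ih =>
      constructor
      · rintro rfl
        have hv : v ∈ G.neighborSet w := hlab.1.symm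
        rw [hnz₁] at hv
        rcases hv with rfl | rfl
        · rw [ha₁, Finset.mem_singleton] at hlab
          exact hblock ⟨a, hle.trans_eq hlab.2, hr⟩
        · have h1 : b₁ < a := ih.2 rfl
          have := hlab.2
          rw [Sym2.eq_swap, hb₁, Finset.mem_singleton] at this
          omega
      · rintro rfl
        have hv : v ∈ G.neighborSet w := hlab.1.symm
        rw [hnc] at hv
        rcases hv with rfl | rfl | rfl
        · exact absurd rfl ih.1
        · have := hlab.2
          rw [Sym2.eq_swap, hb₂, Finset.mem_singleton] at this
          omega
        · have := hlab.2
          rw [Sym2.eq_swap, hb₃, Finset.mem_singleton] at this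
          omega
  exact (key z₁ a h).1 rfl
end

section
/- Let G be a temporal graph with vertex set V, and let r be a vertex that temporally reaches every other vertex. Then there exists a temporal spanning out-tree T_r rooted at r (underlying graph a spanning tree, one label per edge) such that for every vertex v, LD(r,v,T_r) ≥ min over w ∈ V of LD(r,w,G), where LD denotes the latest-departure distance. -/
/-!
STATEMENT 16 (Theorem 3 of the paper): If `r` temporally reaches every other vertex in a
temporal graph `(G, lam, tr)`, then there is a temporal spanning out-tree rooted at `r`
(a spanning tree `T ≤ G` with exactly one label per tree edge, labels taken from `lam`)
in which, for every vertex `v`, the latest-departure distance `LD(r, v, T_r)` is at least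
`min_{w} LD(r, w, G)`.
-/
open SimpleGraph

namespace TPath

variable {V : Type*} {lab : V → V → ℕ → Prop} {tr : V → V → ℕ → ℕ} {u v w : V}

theorem dep_le_ts (P : TPath lab tr u v) (i : Fin P.k) : P.dep ≤ P.ts i := by
  obtain ⟨n, hn⟩ := i
  induction n with
  | zero => exact Nat.le_refl _
  | succ m ih =>
    have hm : m < P.k := Nat.lt_of_succ_lt hn
    have h1 := P.hchain ⟨m, hm⟩ hn
    exact le_trans (ih hm) (le_trans (Nat.le_add_right _ _) h1)

theorem vs_lastIdx_succ (P : TPath lab tr u v) : P.vs P.lastIdx.succ = v := by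
  have e : P.lastIdx.succ = Fin.last P.k := by
    refine Fin.ext ?_
    have := P.hk
    simp [lastIdx]
    omega
  rw [e, P.hl]

theorem last_edge (P : TPath lab tr u v) :
    lab (P.vs P.lastIdx.castSucc) v (P.ts P.lastIdx) := by
  have h := P.hlab P.lastIdx
  rwa [P.vs_lastIdx_succ] at h

theorem arr_eq (P : TPath lab tr u v) :
    P.arr = P.ts P.lastIdx + tr (P.vs P.lastIdx.castSucc) v (P.ts P.lastIdx) := by
  rw [arr, P.vs_lastIdx_succ]

/-- cast the target vertex -/
def castT (P : TPath lab tr u v) (h : v = w) : TPath lab tr u w := h ▸ P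

theorem castT_dep (P : TPath lab tr u v) (h : v = w) : (P.castT h).dep = P.dep := by
  cases h; rfl

theorem castT_arr (P : TPath lab tr u v) (h : v = w) : (P.castT h).arr = P.arr := by
  cases h; rfl

theorem castT_k (P : TPath lab tr u v) (h : v = w) : (P.castT h).k = P.k := by
  cases h; rfl

/-- single-edge path -/
def single (t : ℕ) (h : lab u v t) : TPath lab tr u v where
  k := 1
  hk := Nat.one_pos
  vs := fun i => if i.1 = 0 then u else v
  ts := fun _ => t
  h0 := by simp
  hl := by simp [Fin.last]
  hlab := by
    intro i
    have : i = ⟨0, Nat.one_pos⟩ := Subsingleton.elim _ _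
    subst this
    simpa using h
  hchain := by intro i hi; omega

theorem single_dep (t : ℕ) (h : lab u v t) : (single (tr := tr) t h).dep = t := rfl

theorem single_arr (t : ℕ) (h : lab u v t) :
    (single (tr := tr) t h).arr = t + tr u v t := by
  rw [arr_eq]
  rfl

end TPath

namespace TPath

variable {V : Type*} {lab : V → V → ℕ → Prop} {tr : V → V → ℕ → ℕ} {u v w : V}

/-- extend a path by one edge at the end -/
def snoc (P : TPath lab tr u v) (t : ℕ) (hle : P.arr ≤ t) (h : lab v w t) :
    TPath lab tr u w where
  k := P.k + 1
  hk := Nat.succ_pos _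
  vs := fun i => if hi : i.1 < P.k + 1 then P.vs ⟨i.1, hi⟩ else w
  ts := fun i => if hi : i.1 < P.k then P.ts ⟨i.1, hi⟩ else t
  h0 := by
    show (if hi : ((0 : Fin (P.k + 1 + 1))).1 < P.k + 1 then
        P.vs ⟨((0 : Fin (P.k + 1 + 1))).1, hi⟩ else w) = u
    rw [dif_pos (by simp : ((0 : Fin (P.k + 1 + 1))).1 < P.k + 1)]
    have : (⟨(0 : Fin (P.k + 1 + 1)).1, by simp⟩ : Fin (P.k + 1)) = 0 := by
      refine Fin.ext ?_; simp
    rw [this, P.h0]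
  hl := by
    show (if hi : ((Fin.last (P.k + 1))).1 < P.k + 1 then
        P.vs ⟨((Fin.last (P.k + 1))).1, hi⟩ else w) = w
    rw [dif_neg (by simp : ¬ ((Fin.last (P.k + 1))).1 < P.k + 1)]
  hlab := by
    intro i
    by_cases hi : i.1 < P.k
    · show lab (if h1 : (i.castSucc).1 < P.k + 1 then P.vs ⟨(i.castSucc).1, h1⟩ else w)
        (if h2 : (i.succ).1 < P.k + 1 then P.vs ⟨(i.succ).1, h2⟩ else w)
        (if h3 : i.1 < P.k then P.ts ⟨i.1, h3⟩ else t)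
      have hc : (i.castSucc).1 = i.1 := rfl
      have hs : (i.succ).1 = i.1 + 1 := rfl
      rw [dif_pos (by omega : (i.castSucc).1 < P.k + 1),
        dif_pos (by omega : (i.succ).1 < P.k + 1), dif_pos hi]
      exact P.hlab ⟨i.1, hi⟩
    · have hik : i.1 = P.k := by have := i.isLt; omega
      show lab (if h1 : (i.castSucc).1 < P.k + 1 then P.vs ⟨(i.castSucc).1, h1⟩ else w)
        (if h2 : (i.succ).1 < P.k + 1 then P.vs ⟨(i.succ).1, h2⟩ else w)
        (if h3 : i.1 < P.k then P.ts ⟨i.1, h3⟩ else t)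
      have hc : (i.castSucc).1 = i.1 := rfl
      have hs : (i.succ).1 = i.1 + 1 := rfl
      rw [dif_pos (by omega : (i.castSucc).1 < P.k + 1),
        dif_neg (by omega : ¬ (i.succ).1 < P.k + 1), dif_neg hi]
      have e : (⟨(i.castSucc).1, by omega⟩ : Fin (P.k + 1)) = Fin.last P.k := by
        refine Fin.ext ?_; simp [hc, hik]
      rw [e, P.hl]
      exact h
  hchain := by
    intro i hh
    show (if h3 : i.1 < P.k then P.ts ⟨i.1, h3⟩ else t) +
        tr (if h1 : (i.castSucc).1 < P.k + 1 then P.vs ⟨(i.castSucc).1, h1⟩ else w)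
          (if h2 : (i.succ).1 < P.k + 1 then P.vs ⟨(i.succ).1, h2⟩ else w)
          (if h3 : i.1 < P.k then P.ts ⟨i.1, h3⟩ else t) ≤
        (if h4 : (⟨i.1 + 1, hh⟩ : Fin (P.k + 1)).1 < P.k then P.ts ⟨i.1 + 1, h4⟩ else t)
    have hi : i.1 < P.k := by omega
    have hc : (i.castSucc).1 = i.1 := rfl
    have hs : (i.succ).1 = i.1 + 1 := rfl
    rw [dif_pos hi, dif_pos (by omega : (i.castSucc).1 < P.k + 1),
      dif_pos (by omega : (i.succ).1 < P.k + 1)]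
    by_cases h4 : i.1 + 1 < P.k
    · rw [dif_pos h4]
      exact P.hchain ⟨i.1, hi⟩ h4
    · rw [dif_neg h4]
      have hik : i.1 = P.k - 1 := by omega
      have e1 : (⟨i.1, hi⟩ : Fin P.k) = P.lastIdx := by
        refine Fin.ext ?_; simpa [lastIdx] using hik
      have e2 : (⟨(i.castSucc).1, by omega⟩ : Fin (P.k + 1)) = P.lastIdx.castSucc := by
        refine Fin.ext ?_; simp [hc, lastIdx, hik]
      have e3 : (⟨(i.succ).1, by omega⟩ : Fin (P.k + 1)) = P.lastIdx.succ := by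
        refine Fin.ext ?_; have := P.hk; simp [hs, lastIdx]; omega
      rw [e1, e2, e3]
      exact hle

theorem snoc_dep (P : TPath lab tr u v) (t : ℕ) (hle : P.arr ≤ t) (h : lab v w t) :
    (P.snoc t hle h).dep = P.dep := by
  show (if hi : (0:ℕ) < P.k then P.ts ⟨0, hi⟩ else t) = P.dep
  rw [dif_pos P.hk]
  rfl

theorem snoc_arr (P : TPath lab tr u v) (t : ℕ) (hle : P.arr ≤ t) (h : lab v w t) :
    (P.snoc t hle h).arr = t + tr v w t := by
  rw [arr_eq]
  have hl1 : ((P.snoc t hle h).lastIdx).1 = P.k := by simp [lastIdx, snoc]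
  have e1 : (P.snoc t hle h).ts (P.snoc t hle h).lastIdx = t := by
    show (if hi : ((P.snoc t hle h).lastIdx).1 < P.k then _ else t) = t
    rw [dif_neg (by omega)]
  have e2 : (P.snoc t hle h).vs ((P.snoc t hle h).lastIdx).castSucc = v := by
    show (if hi : (((P.snoc t hle h).lastIdx).castSucc).1 < P.k + 1 then
        P.vs ⟨(((P.snoc t hle h).lastIdx).castSucc).1, hi⟩ else w) = v
    have hc : (((P.snoc t hle h).lastIdx).castSucc).1 = P.k := hl1
    rw [dif_pos (by omega)]
    have e : (⟨(((P.snoc t hle h).lastIdx).castSucc).1, by omega⟩ : Fin (P.k + 1))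
        = Fin.last P.k := by refine Fin.ext ?_; simpa using hl1
    rw [e, P.hl]
  rw [e1, e2]

/-- drop the last edge -/
def init (P : TPath lab tr u v) (h2 : 2 ≤ P.k) :
    TPath lab tr u (P.vs P.lastIdx.castSucc) where
  k := P.k - 1
  hk := by omega
  vs := fun i => P.vs (Fin.castLE (by omega) i)
  ts := fun i => P.ts (Fin.castLE (by omega) i)
  h0 := by
    refine Eq.trans (congrArg P.vs (Fin.ext ?_)) P.h0
    simp
  hl := by
    refine congrArg P.vs (Fin.ext ?_)
    simp [lastIdx]
  hlab := by
    intro i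
    have hi : i.1 < P.k := by have := i.isLt; omega
    exact P.hlab ⟨i.1, hi⟩
  hchain := by
    intro i hh
    have hi : i.1 < P.k := by have := i.isLt; omega
    exact P.hchain ⟨i.1, hi⟩ (show i.1 + 1 < P.k by have := i.isLt; omega)

theorem init_dep (P : TPath lab tr u v) (h2 : 2 ≤ P.k) : (P.init h2).dep = P.dep := rfl

theorem init_k (P : TPath lab tr u v) (h2 : 2 ≤ P.k) : (P.init h2).k = P.k - 1 := rfl

theorem init_arr_le (P : TPath lab tr u v) (h2 : 2 ≤ P.k) :
    (P.init h2).arr ≤ P.ts P.lastIdx := by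
  have key := P.hchain ⟨P.k - 1 - 1, by omega⟩ (show P.k - 1 - 1 + 1 < P.k by omega)
  have e : P.ts (⟨P.k - 1 - 1 + 1, show P.k - 1 - 1 + 1 < P.k by omega⟩ : Fin P.k) = P.ts P.lastIdx := by
    refine congrArg P.ts (Fin.ext ?_)
    simp [lastIdx]
    omega
  rw [e] at key
  exact key

end TPath

open SimpleGraph

lemma parent_acyclic {V : Type*} (T : SimpleGraph V) (p : V → V) (μ : V → ℕ) (r : V)
    (hμ : ∀ v, v ≠ r → μ (p v) < μ v)
    (hT : ∀ x y, T.Adj x y → (x ≠ r ∧ p x = y) ∨ (y ≠ r ∧ p y = x)) :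
    T.IsAcyclic := by
  classical
  intro a c hc
  have hne : c.support.toFinset.Nonempty :=
    ⟨a, List.mem_toFinset.2 (Walk.start_mem_support c)⟩
  obtain ⟨u, hu, hmax⟩ := c.support.toFinset.exists_max_image μ hne
  rw [List.mem_toFinset] at hu
  have hmax' : ∀ x ∈ c.support, μ x ≤ μ u := fun x hx => hmax x (List.mem_toFinset.2 hx)
  have hc2 := hc.rotate hu
  have hsup : ∀ x ∈ (c.rotate u hu).support, μ x ≤ μ u := by
    intro x hx
    rw [Walk.support_eq_cons] at hx
    rcases List.mem_cons.1 hx with h | h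
    · exact h ▸ le_rfl
    · exact hmax' x (List.tail_subset _ ((Walk.support_rotate c u hu).mem_iff.1 h))
  have main : ∀ (w : T.Walk u u), w.IsCycle → (∀ x ∈ w.support, μ x ≤ μ u) → False := by
    intro w hw hs
    cases w with
    | nil => exact hw.ne_nil rfl
    | @cons _ b _ hadj q =>
      have hub : p u = b := by
        rcases hT _ _ hadj with ⟨_, h2⟩ | ⟨h1, h2⟩
        · exact h2
        · exfalso
          have hlt : μ u < μ b := by rw [← h2]; exact hμ b h1
          have hle : μ b ≤ μ u := hs b (by
            rw [Walk.support_cons]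
            exact List.mem_cons_of_mem _ (Walk.start_mem_support q))
          omega
      have hqn : ¬ q.Nil := by
        intro h
        exact hadj.ne (Walk.eq_of_length_eq_zero (Walk.nil_iff_length_eq.1 h)).symm
      have hqrn : ¬ q.reverse.Nil := by
        rwa [Walk.nil_iff_length_eq, Walk.length_reverse, ← Walk.nil_iff_length_eq]
      obtain ⟨y, hadj2, q2, hq2⟩ := (Walk.not_nil_iff).1 hqrn
      have hy : y ∈ q.support := by
        have h1 : y ∈ q.reverse.support := by
          rw [hq2, Walk.support_cons]
          exact List.mem_cons_of_mem _ (Walk.start_mem_support q2)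
        rwa [Walk.support_reverse, List.mem_reverse] at h1
      have huy : p u = y := by
        rcases hT _ _ hadj2 with ⟨_, h2⟩ | ⟨h1, h2⟩
        · exact h2
        · exfalso
          have hlt : μ u < μ y := by rw [← h2]; exact hμ y h1
          have hle : μ y ≤ μ u := hs y (by
            rw [Walk.support_cons]
            exact List.mem_cons_of_mem _ hy)
          omega
      have hyb : y = b := by rw [← huy, hub]
      subst hyb
      have hedge : s(u, y) ∈ q.edges := by
        have h1 : s(u, y) ∈ q.reverse.edges := by
          rw [hq2, Walk.edges_cons]
          exact List.mem_cons_self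
        rwa [Walk.edges_reverse, List.mem_reverse] at h1
      have htrail := hw.isCircuit.isTrail.edges_nodup
      rw [Walk.edges_cons] at htrail
      exact (List.nodup_cons.1 htrail).1 hedge
  exact main (c.rotate u hu) hc2 hsup


theorem exists_ld_spanning_out_tree {V : Type*} [Fintype V]
    (G : SimpleGraph V) (lam : Sym2 V → Finset ℕ) (tr : V → V → ℕ → ℕ) (r : V)
    (hreach : ∀ v : V, v ≠ r →
      Nonempty (TPath (fun x y t => G.Adj x y ∧ t ∈ lam s(x, y)) tr r v)) :
    ∃ (T : SimpleGraph V) (lam' : Sym2 V → Finset ℕ),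
      T ≤ G ∧ T.IsTree ∧
      (∀ e, lam' e ⊆ lam e) ∧
      (∀ e ∈ T.edgeSet, (lam' e).card = 1) ∧
      (∀ e ∉ T.edgeSet, lam' e = ∅) ∧
      (∀ v : V, v ≠ r →
        Nonempty (TPath (fun x y t => T.Adj x y ∧ t ∈ lam' s(x, y)) tr r v) ∧
        sInf {d | ∃ w : V, w ≠ r ∧
            d = sSup {t | ∃ P : TPath (fun x y t' => G.Adj x y ∧ t' ∈ lam s(x, y)) tr r w,
                  P.dep = t}} ≤
          sSup {t | ∃ P : TPath (fun x y t' => T.Adj x y ∧ t' ∈ lam' s(x, y)) tr r v,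
                P.dep = t}) := by
  classical
  by_cases hV : ∃ v : V, v ≠ r
  swap
  · push_neg at hV
    haveI : Nonempty V := ⟨r⟩
    refine ⟨⊥, fun _ => ∅, bot_le, ⟨⟨fun a b => ?_⟩, SimpleGraph.isAcyclic_bot⟩,
      fun e => Finset.empty_subset _, ?_, fun _ _ => rfl, ?_⟩
    · rw [hV a, hV b]
    · intro e he
      rw [SimpleGraph.edgeSet_bot] at he
      exact absurd he (Set.notMem_empty e)
    · intro v hvr
      exact absurd (hV v) hvr
  obtain ⟨v₀, hv₀⟩ := hV
  -- a uniform upper bound on all labels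
  set B := (Finset.univ : Finset (Sym2 V)).sup (fun e => (lam e).sup id) with hBdef
  have hbdd : ∀ (lam2 : Sym2 V → Finset ℕ), (∀ e, lam2 e ⊆ lam e) →
      ∀ (adj : V → V → Prop) (w : V),
      BddAbove {t | ∃ P : TPath (fun x y t' => adj x y ∧ t' ∈ lam2 s(x, y)) tr r w,
        P.dep = t} := by
    intro lam2 hsub adj w
    refine ⟨B, fun t ht => ?_⟩
    obtain ⟨P, hP⟩ := ht
    have h1 := P.hlab ⟨0, P.hk⟩
    have h2 : t ∈ lam2 s(P.vs (⟨0, P.hk⟩ : Fin P.k).castSucc,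
        P.vs (⟨0, P.hk⟩ : Fin P.k).succ) := by
      rw [← hP]; exact h1.2
    have h3 := hsub _ h2
    exact le_trans (Finset.le_sup (f := id) h3)
      (Finset.le_sup (f := fun e => (lam e).sup id) (Finset.mem_univ _))
  -- the minimum latest-departure value
  set d := sInf {d | ∃ w : V, w ≠ r ∧
      d = sSup {t | ∃ P : TPath (fun x y t' => G.Adj x y ∧ t' ∈ lam s(x, y)) tr r w,
            P.dep = t}} with hddef
  -- every vertex has a path departing at time ≥ d
  have hdle : ∀ w : V, w ≠ r →
      ∃ P : TPath (fun x y t' => G.Adj x y ∧ t' ∈ lam s(x, y)) tr r w, d ≤ P.dep := by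
    intro w hw
    have hne : {t | ∃ P : TPath (fun x y t' => G.Adj x y ∧ t' ∈ lam s(x, y)) tr r w,
        P.dep = t}.Nonempty := ⟨(Classical.choice (hreach w hw)).dep,
          Classical.choice (hreach w hw), rfl⟩
    obtain ⟨P, hP⟩ := Nat.sSup_mem hne (hbdd lam (fun e => subset_rfl) G.Adj w)
    exact ⟨P, hP ▸ Nat.sInf_le ⟨w, hw, rfl⟩⟩
  -- choose for each vertex an arrival-minimal, then length-minimal, path with dep ≥ d
  have key : ∀ w : V, w ≠ r →
      ∃ P : TPath (fun x y t' => G.Adj x y ∧ t' ∈ lam s(x, y)) tr r w,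
      d ≤ P.dep ∧
      (∀ Q : TPath (fun x y t' => G.Adj x y ∧ t' ∈ lam s(x, y)) tr r w,
        d ≤ Q.dep → P.arr ≤ Q.arr) ∧
      (∀ Q : TPath (fun x y t' => G.Adj x y ∧ t' ∈ lam s(x, y)) tr r w,
        d ≤ Q.dep → Q.arr = P.arr → P.k ≤ Q.k) := by
    intro w hw
    obtain ⟨P0, hP0⟩ := hdle w hw
    have hne1 : {a | ∃ P : TPath (fun x y t' => G.Adj x y ∧ t' ∈ lam s(x, y)) tr r w,
        d ≤ P.dep ∧ P.arr = a}.Nonempty := ⟨P0.arr, P0, hP0, rfl⟩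
    obtain ⟨P1, hP1d, hP1a⟩ := Nat.sInf_mem hne1
    have hne2 : {kk | ∃ P : TPath (fun x y t' => G.Adj x y ∧ t' ∈ lam s(x, y)) tr r w,
        d ≤ P.dep ∧ P.arr = sInf {a | ∃ P : TPath (fun x y t' => G.Adj x y ∧ t' ∈ lam s(x, y)) tr r w,
          d ≤ P.dep ∧ P.arr = a} ∧ P.k = kk}.Nonempty := ⟨P1.k, P1, hP1d, hP1a, rfl⟩
    obtain ⟨P, hPd, hPa, hPk⟩ := Nat.sInf_mem hne2
    refine ⟨P, hPd, ?_, ?_⟩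
    · intro Q hQ
      rw [hPa]
      exact Nat.sInf_le ⟨Q, hQ, rfl⟩
    · intro Q hQ hQa
      rw [hPk]
      exact Nat.sInf_le ⟨Q, hQ, by rw [hQa, hPa], rfl⟩
  choose PP hPdd hPmin hPkmin using key
  -- parent map and data
  set p : V → V := fun v => if h : v = r then r else (PP v h).vs (PP v h).lastIdx.castSucc
    with hpdef
  set tl : V → ℕ := fun v => if h : v = r then 0 else (PP v h).ts (PP v h).lastIdx with htldef
  set Av : V → ℕ := fun v => if h : v = r then 0 else (PP v h).arr with hAvdef
  set Kv : V → ℕ := fun v => if h : v = r then 0 else (PP v h).k with hKvdef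
  have hp : ∀ v (h : v ≠ r), p v = (PP v h).vs (PP v h).lastIdx.castSucc :=
    fun v h => dif_neg h
  have htl : ∀ v (h : v ≠ r), tl v = (PP v h).ts (PP v h).lastIdx := fun v h => dif_neg h
  have hAv : ∀ v (h : v ≠ r), Av v = (PP v h).arr := fun v h => dif_neg h
  have hKv : ∀ v (h : v ≠ r), Kv v = (PP v h).k := fun v h => dif_neg h
  have hadjG : ∀ v (h : v ≠ r), G.Adj (p v) v := by
    intro v h
    rw [hp v h]
    exact ((PP v h).last_edge).1
  have hmemlam : ∀ v (h : v ≠ r), tl v ∈ lam s(p v, v) := by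
    intro v h
    rw [htl v h, hp v h]
    exact ((PP v h).last_edge).2
  have htld : ∀ v (h : v ≠ r), d ≤ tl v := by
    intro v h
    rw [htl v h]
    exact le_trans (hPdd v h) (TPath.dep_le_ts _ _)
  have hAveq : ∀ v (h : v ≠ r), Av v = tl v + tr (p v) v (tl v) := by
    intro v h
    rw [hAv v h, htl v h, hp v h]
    exact (PP v h).arr_eq
  have htlAv : ∀ v (h : v ≠ r), tl v ≤ Av v := by
    intro v h
    rw [hAveq v h]
    exact Nat.le_add_right _ _
  have hPk1 : ∀ v (h : v ≠ r), (PP v h).k = 1 → p v = r := by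
    intro v h hk1
    have e : (PP v h).lastIdx.castSucc = 0 := by
      refine Fin.ext ?_
      simp [TPath.lastIdx, hk1]
    rw [hp v h, e, (PP v h).h0]
  have hk2 : ∀ v (h : v ≠ r), p v ≠ r → 2 ≤ (PP v h).k := by
    intro v h hpr
    by_contra hc
    have := (PP v h).hk
    exact hpr (hPk1 v h (by omega))
  -- the one-step prefix path
  have hQ : ∀ v (h : v ≠ r) (h2 : 2 ≤ (PP v h).k),
      ∃ Q : TPath (fun x y t' => G.Adj x y ∧ t' ∈ lam s(x, y)) tr r (p v),
        d ≤ Q.dep ∧ Q.arr ≤ tl v ∧ Q.k = (PP v h).k - 1 := by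
    intro v h h2
    refine ⟨TPath.castT ((PP v h).init h2) (hp v h).symm, ?_, ?_, ?_⟩
    · rw [TPath.castT_dep, TPath.init_dep]
      exact hPdd v h
    · rw [TPath.castT_arr, htl v h]
      exact (PP v h).init_arr_le h2
    · rw [TPath.castT_k]
      rfl
  have hpne : ∀ v (h : v ≠ r), p v ≠ v := by
    intro v h hpv
    by_cases hk1 : (PP v h).k = 1
    · exact h (hpv.symm.trans (hPk1 v h hk1))
    · have h2 : 2 ≤ (PP v h).k := by have := (PP v h).hk; omega
      obtain ⟨Q0, hQd, hQa, hQk⟩ := hQ v h h2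
      have h3 := hPmin v h (TPath.castT Q0 hpv) (by rw [TPath.castT_dep]; exact hQd)
      rw [TPath.castT_arr] at h3
      have htle : tl v ≤ (PP v h).arr := by
        rw [htl v h]
        exact Nat.le_add_right _ _
      have h4 : Q0.arr = (PP v h).arr := le_antisymm (le_trans hQa htle) h3
      have h5 := hPkmin v h (TPath.castT Q0 hpv) (by rw [TPath.castT_dep]; exact hQd)
        (by rw [TPath.castT_arr]; exact h4)
      rw [TPath.castT_k, hQk] at h5
      omega
  have hAvle : ∀ v (hv : v ≠ r) (hpr : p v ≠ r),
      Av (p v) ≤ tl v ∧ (Av (p v) = Av v → Kv (p v) < Kv v) := by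
    intro v hv hpr
    obtain ⟨Q0, hQd, hQa, hQk⟩ := hQ v hv (hk2 v hv hpr)
    have h1 : (PP (p v) hpr).arr ≤ Q0.arr := hPmin (p v) hpr Q0 hQd
    constructor
    · rw [hAv (p v) hpr]
      exact le_trans h1 hQa
    · intro hEq
      have hAvv := hAv (p v) hpr
      have h2 : Q0.arr = (PP (p v) hpr).arr := by
        have ha : Av (p v) ≤ Q0.arr := by rw [hAvv]; exact h1
        have hb : Q0.arr ≤ Av v := le_trans hQa (htlAv v hv)
        rw [← hAvv]
        omega
      have h3 := hPkmin (p v) hpr Q0 hQd h2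
      rw [hQk] at h3
      rw [hKv (p v) hpr, hKv v hv]
      have := hk2 v hv hpr
      omega
  -- the measure
  set N := (Finset.univ : Finset V).sup Kv + 1 with hNdef
  have hKN : ∀ v : V, Kv v < N := fun v =>
    Nat.lt_succ_of_le (Finset.le_sup (Finset.mem_univ v))
  set μf : V → ℕ := fun v => if v = r then 0 else Av v * N + Kv v + 1 with hμdef
  have hμr : μf r = 0 := if_pos rfl
  have hμv : ∀ v, v ≠ r → μf v = Av v * N + Kv v + 1 := fun v h => if_neg h
  have hdec : ∀ v, v ≠ r → μf (p v) < μf v := by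
    intro v hv
    by_cases hpr : p v = r
    · rw [hpr, hμr, hμv v hv]
      omega
    · rw [hμv _ hpr, hμv v hv]
      obtain ⟨hle, himp⟩ := hAvle v hv hpr
      have hAA : Av (p v) ≤ Av v := le_trans hle (htlAv v hv)
      rcases lt_or_eq_of_le hAA with hlt | heq
      · have hm1 : (Av (p v) + 1) * N ≤ Av v * N := Nat.mul_le_mul_right N hlt
        have hm2 : (Av (p v) + 1) * N = Av (p v) * N + N := by ring
        have hm3 := hKN (p v)
        linarith
      · have := himp heq
        rw [heq]
        omega
  -- the tree
  set T : SimpleGraph V :=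
    { Adj := fun x y => (x ≠ r ∧ p x = y) ∨ (y ≠ r ∧ p y = x)
      symm := by
        refine ⟨fun x y hxy => ?_⟩
        rcases hxy with ⟨h1, h2⟩ | ⟨h1, h2⟩
        · exact Or.inr ⟨h1, h2⟩
        · exact Or.inl ⟨h1, h2⟩
      loopless := by
        refine ⟨fun x hx => ?_⟩
        rcases hx with ⟨h1, h2⟩ | ⟨h1, h2⟩ <;> exact hpne x h1 h2 } with hTdef
  have hTadj : ∀ x y : V, T.Adj x y ↔ ((x ≠ r ∧ p x = y) ∨ (y ≠ r ∧ p y = x)) :=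
    fun x y => Iff.rfl
  -- label function
  set lam' : Sym2 V → Finset ℕ :=
    fun e => if h : ∃ v, v ≠ r ∧ e = s(p v, v) then {tl h.choose} else ∅ with hlam'def
  have huniq : ∀ v, v ≠ r → ∀ w, w ≠ r → s(p v, v) = s(p w, w) → v = w := by
    intro v hv w hw he
    rcases Sym2.eq_iff.1 he with ⟨h1, h2⟩ | ⟨h1, h2⟩
    · exact h2
    · exfalso
      have ha := hdec v hv
      have hb := hdec w hw
      rw [h1] at ha
      rw [← h2] at hb
      omega
  have hlam'eq : ∀ v (h : v ≠ r), lam' s(p v, v) = {tl v} := by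
    intro v hv
    have hex : ∃ w, w ≠ r ∧ s(p v, v) = s(p w, w) := ⟨v, hv, rfl⟩
    show (if h : ∃ w, w ≠ r ∧ s(p v, v) = s(p w, w) then {tl h.choose} else ∅) = {tl v}
    rw [dif_pos hex]
    have hspec := hex.choose_spec
    have := huniq v hv hex.choose hspec.1 hspec.2
    rw [← this]
  have hedgeT : ∀ e : Sym2 V, e ∈ T.edgeSet ↔ ∃ v, v ≠ r ∧ e = s(p v, v) := by
    intro e
    induction e using Sym2.ind with
    | _ x y =>
      rw [SimpleGraph.mem_edgeSet]
      constructor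
      · intro hxy
        rcases (hTadj x y).1 hxy with ⟨h1, h2⟩ | ⟨h1, h2⟩
        · exact ⟨x, h1, by rw [h2, Sym2.eq_swap]⟩
        · exact ⟨y, h1, by rw [h2]⟩
      · rintro ⟨v, hv, he⟩
        rcases Sym2.eq_iff.1 he with ⟨h1, h2⟩ | ⟨h1, h2⟩
        · exact (hTadj x y).2 (Or.inr ⟨by rw [h2]; exact hv, by rw [h2, ← h1]⟩)
        · exact (hTadj x y).2 (Or.inl ⟨by rw [h1]; exact hv, by rw [h1, ← h2]⟩)
  have hsub' : ∀ e, lam' e ⊆ lam e := by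
    intro e
    show (if h : ∃ v, v ≠ r ∧ e = s(p v, v) then {tl h.choose} else ∅) ⊆ lam e
    by_cases hex : ∃ v, v ≠ r ∧ e = s(p v, v)
    · rw [dif_pos hex]
      have hspec := hex.choose_spec
      have hm : tl hex.choose ∈ lam s(p hex.choose, hex.choose) :=
        hmemlam hex.choose hspec.1
      rw [← hspec.2] at hm
      exact Finset.singleton_subset_iff.2 hm
    · rw [dif_neg hex]
      exact Finset.empty_subset _
  -- reachability in T
  have hreachT : ∀ v : V, T.Reachable r v := by
    have H : ∀ n, ∀ v : V, μf v ≤ n → T.Reachable r v := by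
      intro n
      induction n with
      | zero =>
        intro v hv
        by_cases hvr : v = r
        · subst hvr; exact Reachable.refl v
        · rw [hμv v hvr] at hv; omega
      | succ n ih =>
        intro v hv
        by_cases hvr : v = r
        · subst hvr; exact Reachable.refl v
        · have hadj : T.Adj (p v) v := (hTadj _ _).2 (Or.inr ⟨hvr, rfl⟩)
          have := hdec v hvr
          exact (ih (p v) (by omega)).trans hadj.reachable
    intro v
    exact H (μf v) v le_rfl
  -- tree paths
  have treepath : ∀ n, ∀ v : V, μf v ≤ n → v ≠ r →
      ∃ P : TPath (fun x y t' => T.Adj x y ∧ t' ∈ lam' s(x, y)) tr r v,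
        d ≤ P.dep ∧ P.arr = Av v := by
    intro n
    induction n with
    | zero =>
      intro v hv hvr
      rw [hμv v hvr] at hv
      omega
    | succ n ih =>
      intro v hv hvr
      by_cases hpr : p v = r
      · have hlabe : T.Adj r v ∧ tl v ∈ lam' s(r, v) := by
          constructor
          · exact (hTadj r v).2 (Or.inr ⟨hvr, hpr⟩)
          · rw [← hpr, hlam'eq v hvr]
            exact Finset.mem_singleton_self _
        refine ⟨TPath.single (tl v) hlabe, ?_, ?_⟩
        · rw [TPath.single_dep]
          exact htld v hvr
        · rw [TPath.single_arr, hAveq v hvr, hpr]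
      · have := hdec v hvr
        obtain ⟨Q, hQd, hQa⟩ := ih (p v) (by omega) hpr
        have hle : Q.arr ≤ tl v := by
          rw [hQa]
          exact (hAvle v hvr hpr).1
        have hlabe : T.Adj (p v) v ∧ tl v ∈ lam' s(p v, v) :=
          ⟨(hTadj _ _).2 (Or.inr ⟨hvr, rfl⟩), by
            rw [hlam'eq v hvr]; exact Finset.mem_singleton_self _⟩
        refine ⟨Q.snoc (tl v) hle hlabe, ?_, ?_⟩
        · rw [TPath.snoc_dep]
          exact hQd
        · rw [TPath.snoc_arr, hAveq v hvr]
  -- conclude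
  haveI : Nonempty V := ⟨r⟩
  refine ⟨T, lam', ?_, ?_, hsub', ?_, ?_, ?_⟩
  · intro x y hxy
    rcases (hTadj x y).1 hxy with ⟨h1, h2⟩ | ⟨h1, h2⟩
    · have := hadjG x h1
      rw [h2] at this
      exact this.symm
    · have := hadjG y h1
      rw [h2] at this
      exact this
  · refine ⟨SimpleGraph.Connected.mk (fun a b => ?_), ?_⟩
    · exact (hreachT a).symm.trans (hreachT b)
    · exact parent_acyclic T p μf r hdec (fun x y h => (hTadj x y).1 h)
  · intro e he
    obtain ⟨v, hv, hev⟩ := (hedgeT e).1 he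
    rw [hev, hlam'eq v hv]
    exact Finset.card_singleton _
  · intro e he
    show (if h : ∃ v, v ≠ r ∧ e = s(p v, v) then {tl h.choose} else ∅) = ∅
    rw [dif_neg]
    intro hex
    exact he ((hedgeT e).2 hex)
  · intro v hv
    obtain ⟨P, hPd', _⟩ := treepath (μf v) v le_rfl hv
    exact ⟨⟨P⟩, le_trans hPd' (le_csSup (hbdd lam' hsub' T.Adj v) ⟨P, rfl⟩)⟩
end
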